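/- Let P^{U0}_2 denote the distribution on X_2 that assigns probability 0 to the symbol 0 and probability 1/(r_2−1) to each nonzero symbol. For the product input distribution P(x_1,x_2) = 1{x_1 = 0}·P^{U0}_2(x_2), the rate pair R*_4 is attained: I_P(X_1;Y_2|X_2) = 0 and I_P(X_2;Y_1|X_1) = C_{2,0}. -/

import Mathlib

open Real BigOperators Finset

/-- Entropy of a finite probability vector, with the convention `0 * log 0 = 0`
(automatic since `Real.log 0 = 0`). -/
noncomputable def ent {n : ℕ} (p : Fin n → ℝ) : ℝ := -∑ y, p y * Real.log (p y)

/-- `Q` is a probability distribution on `Fin n`. -/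
def IsProbDist {n : ℕ} (Q : Fin n → ℝ) : Prop := (∀ x, 0 ≤ Q x) ∧ ∑ x, Q x = 1

/-- `P` is a joint probability distribution. -/
def IsJointProbDist {m n : ℕ} (P : Fin m → Fin n → ℝ) : Prop :=
  (∀ x1 x2, 0 ≤ P x1 x2) ∧ ∑ x1, ∑ x2, P x1 x2 = 1

/-- First marginal `P_1`. -/
noncomputable def marg1 {m n : ℕ} (P : Fin m → Fin n → ℝ) (x1 : Fin m) : ℝ := ∑ x2, P x1 x2

/-- Second marginal `P_2`. -/
noncomputable def marg2 {m n : ℕ} (P : Fin m → Fin n → ℝ) (x2 : Fin n) : ℝ := ∑ x1, P x1 x2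

/-- Conditional mutual information `I_P(X₁;Y₂|X₂)`; terms with
`P x1 x2 * W2 x1 x2 y2 = 0` vanish, and summands with `marg2 P x2 = 0` vanish
since then `P x1 x2 = 0`. -/
noncomputable def condMI1 {m n t : ℕ} (P : Fin m → Fin n → ℝ)
    (W2 : Fin m → Fin n → Fin t → ℝ) : ℝ :=
  ∑ x2, ∑ x1, ∑ y2, P x1 x2 * W2 x1 x2 y2 *
    Real.log (W2 x1 x2 y2 / ((∑ x1', P x1' x2 * W2 x1' x2 y2) / marg2 P x2))

/-- Conditional mutual information `I_P(X₂;Y₁|X₁)`. -/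
noncomputable def condMI2 {m n t : ℕ} (P : Fin m → Fin n → ℝ)
    (W1 : Fin m → Fin n → Fin t → ℝ) : ℝ :=
  ∑ x1, ∑ x2, ∑ y1, P x1 x2 * W1 x1 x2 y1 *
    Real.log (W1 x1 x2 y1 / ((∑ x2', P x1 x2' * W1 x1 x2' y1) / marg1 P x1))

/-- Structural assumptions of a generalized push-to-talk two-way channel with
input alphabets `Fin (r1+3)`, `Fin (r2+3)` and output alphabets `Fin (s1+2)`,
`Fin (s2+2)`: both marginal channels are transition matrices; the row of
input `0` of each user is uniform; for each state, the nonzero-input rows are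
permutations of the row of input `1` and have constant column sums
(weak symmetry). -/
def GenPTT {r1 r2 s1 s2 : ℕ} (W1 : Fin (r1 + 3) → Fin (r2 + 3) → Fin (s1 + 2) → ℝ)
    (W2 : Fin (r1 + 3) → Fin (r2 + 3) → Fin (s2 + 2) → ℝ) : Prop :=
  (∀ x1 x2 y1, 0 ≤ W1 x1 x2 y1) ∧ (∀ x1 x2 y2, 0 ≤ W2 x1 x2 y2) ∧
  (∀ x1 x2, ∑ y1, W1 x1 x2 y1 = 1) ∧ (∀ x1 x2, ∑ y2, W2 x1 x2 y2 = 1) ∧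
  (∀ x2 y2, W2 0 x2 y2 = 1 / ((s2 : ℝ) + 2)) ∧
  (∀ x2, ∀ x1 : Fin (r1 + 3), x1 ≠ 0 →
    ∃ σ : Equiv.Perm (Fin (s2 + 2)), ∀ y2, W2 x1 x2 y2 = W2 1 x2 (σ y2)) ∧
  (∀ x2, ∀ y2 y2' : Fin (s2 + 2),
    ∑ x1 ∈ Finset.univ.filter (fun x1 => x1 ≠ (0 : Fin (r1 + 3))), W2 x1 x2 y2 =
    ∑ x1 ∈ Finset.univ.filter (fun x1 => x1 ≠ (0 : Fin (r1 + 3))), W2 x1 x2 y2') ∧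
  (∀ x1 y1, W1 x1 0 y1 = 1 / ((s1 : ℝ) + 2)) ∧
  (∀ x1, ∀ x2 : Fin (r2 + 3), x2 ≠ 0 →
    ∃ σ : Equiv.Perm (Fin (s1 + 2)), ∀ y1, W1 x1 x2 y1 = W1 x1 1 (σ y1)) ∧
  (∀ x1, ∀ y1 y1' : Fin (s1 + 2),
    ∑ x2 ∈ Finset.univ.filter (fun x2 => x2 ≠ (0 : Fin (r2 + 3))), W1 x1 x2 y1 =
    ∑ x2 ∈ Finset.univ.filter (fun x2 => x2 ≠ (0 : Fin (r2 + 3))), W1 x1 x2 y1')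

/-- `C_{1,x₂} = log s₂ − H(row of input 1 of Q_{1,x₂})`. -/
noncomputable def C1 {r1 r2 s2 : ℕ} (W2 : Fin (r1 + 3) → Fin (r2 + 3) → Fin (s2 + 2) → ℝ)
    (x2 : Fin (r2 + 3)) : ℝ := Real.log ((s2 : ℝ) + 2) - ent (fun y2 => W2 1 x2 y2)

/-- `C_{2,x₁} = log s₁ − H(row of input 1 of Q_{2,x₁})`. -/
noncomputable def C2 {r1 r2 s1 : ℕ} (W1 : Fin (r1 + 3) → Fin (r2 + 3) → Fin (s1 + 2) → ℝ)
    (x1 : Fin (r1 + 3)) : ℝ := Real.log ((s1 : ℝ) + 2) - ent (fun y1 => W1 x1 1 y1)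

/-- The channel symmetry property: `C_{1,x₂} = C_{1,1}` for all `x₂ ≠ 0` and
`C_{2,x₁} = C_{2,1}` for all `x₁ ≠ 0`. -/
def SymProp {r1 r2 s1 s2 : ℕ} (W1 : Fin (r1 + 3) → Fin (r2 + 3) → Fin (s1 + 2) → ℝ)
    (W2 : Fin (r1 + 3) → Fin (r2 + 3) → Fin (s2 + 2) → ℝ) : Prop :=
  (∀ x2 : Fin (r2 + 3), x2 ≠ 0 → C1 W2 x2 = C1 W2 1) ∧
  (∀ x1 : Fin (r1 + 3), x1 ≠ 0 → C2 W1 x1 = C2 W1 1)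

/-! With `X₁ = 0` deterministic, the first user conveys nothing, so `I(X₁;Y₂|X₂) = 0`, and
`I(X₂;Y₁|X₁)` reduces to the mutual information of the channel `W₁(·|0,·)` under the uniform
input on the nonzero symbols. The constant column sums of the weakly symmetric submatrix make
the output uniform, so that mutual information is `log s₁` minus the average row entropy, and the
rows, being permutations of one another, all have the entropy of row `1`. -/

noncomputable def mutualInfo {ι : Type*} [Fintype ι] {t : ℕ} (Q : ι → ℝ) (V : ι → Fin t → ℝ) : ℝ :=
  ∑ x, ∑ y, Q x * V x y * Real.log (V x y / ∑ x', Q x' * V x' y)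

noncomputable def unifOn {ι : Type*} [DecidableEq ι] (S : Finset ι) (x : ι) : ℝ :=
  if x ∈ S then (#S : ℝ)⁻¹ else 0

theorem sum_unifOn {ι : Type*} [Fintype ι] [DecidableEq ι] {S : Finset ι} (hS : S.Nonempty) :
    ∑ x, unifOn S x = 1 := by
  simp only [unifOn, Finset.sum_ite_mem, Finset.univ_inter, Finset.sum_const, nsmul_eq_mul]
  exact mul_inv_cancel₀ (Nat.cast_ne_zero.2 hS.card_pos.ne')

theorem sum_unifOn_mul {ι : Type*} [Fintype ι] [DecidableEq ι] (S : Finset ι) (f : ι → ℝ) :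
    ∑ x, unifOn S x * f x = (#S : ℝ)⁻¹ * ∑ x ∈ S, f x := by
  simp [unifOn, ite_mul, Finset.sum_ite_mem, Finset.mul_sum]

theorem ent_comp_perm {t : ℕ} (p : Fin t → ℝ) (σ : Equiv.Perm (Fin t)) :
    ent (fun y => p (σ y)) = ent p := by
  simp only [ent, Equiv.sum_comp σ (fun y => p y * Real.log (p y))]

theorem sum_mul_log_div_inv_card {t : ℕ} (p : Fin t → ℝ) (hp : ∑ y, p y = 1) :
    ∑ y, p y * Real.log (p y / (t : ℝ)⁻¹) = Real.log t - ent p := by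
  have ht : (t : ℝ) ≠ 0 := by
    rintro h
    obtain rfl : t = 0 := by exact_mod_cast h
    simp at hp
  have hterm : ∀ y, p y * Real.log (p y / (t : ℝ)⁻¹) = p y * Real.log (p y) + p y * Real.log t := by
    intro y
    rcases eq_or_ne (p y) 0 with h | h
    · simp [h]
    · rw [div_inv_eq_mul, Real.log_mul h ht, mul_add]
  rw [Finset.sum_congr rfl fun y _ => hterm y, Finset.sum_add_distrib, ← Finset.sum_mul, hp, ent]
  ring

theorem sum_eq_card_div_of_colSum_const {ι : Type*} {t : ℕ} (S : Finset ι) (V : ι → Fin t → ℝ)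
    (hrow : ∀ x ∈ S, ∑ y, V x y = 1) (hcol : ∀ y y', ∑ x ∈ S, V x y = ∑ x ∈ S, V x y')
    (y : Fin t) : ∑ x ∈ S, V x y = #S / t := by
  have htot : ∑ y', ∑ x ∈ S, V x y' = #S := by
    rw [Finset.sum_comm, Finset.sum_congr rfl hrow]
    simp
  rw [Finset.sum_congr rfl fun y' _ => hcol y' y] at htot
  simp only [Finset.sum_const, Finset.card_univ, Fintype.card_fin, nsmul_eq_mul] at htot
  have ht : (t : ℝ) ≠ 0 := Nat.cast_ne_zero.2 (Fin.pos y).ne'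
  field_simp
  linarith

theorem mutualInfo_eq_of_output_uniform {ι : Type*} [Fintype ι] {t : ℕ} (Q : ι → ℝ)
    (V : ι → Fin t → ℝ) (hrow : ∀ x, ∑ y, V x y = 1)
    (hout : ∀ y, ∑ x, Q x * V x y = (t : ℝ)⁻¹) :
    mutualInfo Q V = ∑ x, Q x * (Real.log t - ent (V x)) := by
  refine Finset.sum_congr rfl fun x _ => ?_
  simp only [hout, mul_assoc, ← Finset.mul_sum]
  rw [sum_mul_log_div_inv_card _ (hrow x)]

theorem mutualInfo_unifOn_of_weaklySymmetric {ι : Type*} [Fintype ι] [DecidableEq ι] {t : ℕ}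
    (S : Finset ι) (V : ι → Fin t → ℝ) {x₀ : ι} (hx₀ : x₀ ∈ S) (hrow : ∀ x, ∑ y, V x y = 1)
    (hperm : ∀ x ∈ S, ∃ σ : Equiv.Perm (Fin t), ∀ y, V x y = V x₀ (σ y))
    (hcol : ∀ y y', ∑ x ∈ S, V x y = ∑ x ∈ S, V x y') :
    mutualInfo (unifOn S) V = Real.log t - ent (V x₀) := by
  have hS : (#S : ℝ) ≠ 0 := Nat.cast_ne_zero.2 (Finset.card_ne_zero_of_mem hx₀)
  have hout : ∀ y, ∑ x, unifOn S x * V x y = (t : ℝ)⁻¹ := by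
    intro y
    rw [sum_unifOn_mul, sum_eq_card_div_of_colSum_const S V (fun x _ => hrow x) hcol y]
    field_simp
  have hent : ∀ x ∈ S, ent (V x) = ent (V x₀) := by
    intro x hx
    obtain ⟨σ, hσ⟩ := hperm x hx
    rw [← ent_comp_perm (V x₀) σ]
    exact congrArg ent (funext hσ)
  rw [mutualInfo_eq_of_output_uniform _ V hrow hout, sum_unifOn_mul,
    Finset.sum_congr rfl fun x hx => by rw [hent x hx], Finset.sum_const, nsmul_eq_mul]
  field_simp

theorem condMI1_eq_zero_of_eq_zero_of_ne {m n t : ℕ} (P : Fin m → Fin n → ℝ)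
    (W : Fin m → Fin n → Fin t → ℝ) (a : Fin m) (hP : ∀ x1 x2, x1 ≠ a → P x1 x2 = 0) :
    condMI1 P W = 0 := by
  refine Finset.sum_eq_zero fun x2 _ => Finset.sum_eq_zero fun x1 _ =>
    Finset.sum_eq_zero fun y _ => ?_
  by_cases hx1 : x1 = a
  swap
  · simp [hP x1 x2 hx1]
  subst hx1
  have hout : ∑ x1', P x1' x2 * W x1' x2 y = P x1 x2 * W x1 x2 y :=
    Finset.sum_eq_single x1 (fun b _ hb => by simp [hP b x2 hb]) (by simp)
  have hmarg : marg2 P x2 = P x1 x2 :=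
    Finset.sum_eq_single x1 (fun b _ hb => hP b x2 hb) (by simp)
  rcases eq_or_ne (P x1 x2) 0 with hPa | hPa
  · simp [hPa]
  rcases eq_or_ne (W x1 x2 y) 0 with hW | hW
  · simp [hW]
  rw [hout, hmarg, mul_div_cancel_left₀ _ hPa, div_self hW, Real.log_one, mul_zero]

theorem condMI2_indicator_mul {m n t : ℕ} (a : Fin m) (Q : Fin n → ℝ) (hQ : ∑ x, Q x = 1)
    (W : Fin m → Fin n → Fin t → ℝ) :
    condMI2 (fun x1 x2 => (if x1 = a then (1 : ℝ) else 0) * Q x2) W = mutualInfo Q (W a) := by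
  rw [condMI2, Finset.sum_eq_single a (fun b _ hb => by simp [hb]) (by simp)]
  simp [marg1, hQ, mutualInfo]

theorem stmt14_general (r1 r2 s1 s2 : ℕ)
    (W1 : Fin (r1 + 3) → Fin (r2 + 3) → Fin (s1 + 2) → ℝ)
    (W2 : Fin (r1 + 3) → Fin (r2 + 3) → Fin (s2 + 2) → ℝ)
    (hW : GenPTT W1 W2) :
    condMI1 (fun x1 x2 => (if x1 = 0 then (1 : ℝ) else 0) *
        (if x2 = 0 then (0 : ℝ) else ((r2 : ℝ) + 2)⁻¹)) W2 = 0 ∧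
    condMI2 (fun x1 x2 => (if x1 = 0 then (1 : ℝ) else 0) *
        (if x2 = 0 then (0 : ℝ) else ((r2 : ℝ) + 2)⁻¹)) W1 = C2 W1 0 := by
  obtain ⟨-, -, hrow, -, -, -, -, -, hperm, hcol⟩ := hW
  set S := Finset.univ.filter fun x2 : Fin (r2 + 3) => x2 ≠ 0
  have hQ : ∀ x2, (if x2 = 0 then (0 : ℝ) else ((r2 : ℝ) + 2)⁻¹) = unifOn S x2 := by
    intro x2
    by_cases h : x2 = 0 <;> simp [unifOn, S, h, Finset.filter_ne']
  have h1 : (1 : Fin (r2 + 3)) ∈ S := by simp [S]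
  refine ⟨condMI1_eq_zero_of_eq_zero_of_ne _ W2 0 fun x1 x2 h => by simp [h], ?_⟩
  simp only [hQ]
  rw [condMI2_indicator_mul 0 _ (sum_unifOn ⟨1, h1⟩),
    mutualInfo_unifOn_of_weaklySymmetric S (W1 0) h1 (hrow 0) 
    (fun x hx => hperm 0 x (Finset.mem_filter.1 hx).2) (hcol 0), C2]
  push_cast
  rfl

/-- The rate pair `R*₄ = (0, C₂₀)` is attained by `1{x₁ = 0} × P^{U0}₂`. -/
theorem stmt14 (r1 r2 s1 s2 : ℕ)
    (W1 : Fin (r1 + 3) → Fin (r2 + 3) → Fin (s1 + 2) → ℝ)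
    (W2 : Fin (r1 + 3) → Fin (r2 + 3) → Fin (s2 + 2) → ℝ)
    (hW : GenPTT W1 W2) (hSym : SymProp W1 W2) :
    condMI1 (fun x1 x2 => (if x1 = 0 then (1 : ℝ) else 0) *
        (if x2 = 0 then (0 : ℝ) else ((r2 : ℝ) + 2)⁻¹)) W2 = 0 ∧
    condMI2 (fun x1 x2 => (if x1 = 0 then (1 : ℝ) else 0) *
        (if x2 = 0 then (0 : ℝ) else ((r2 : ℝ) + 2)⁻¹)) W1 = C2 W1 0 :=
  stmt14_general r1 r2 s1 s2 W1 W2 hW
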